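/- For every α ∈ (0,1) and every integer k ≥ 0, one has |z·(g̃_k(z) − sect_p(z))| ≤ max{ α, (1 − α_k)/(1 + α_k) } for every nonzero z ∈ S_p. -/

import Mathlib

/-- `mu p t = ((t - t^p)/((p-1)(1-t)))^(1/p)`, the real positive `p`th root. -/
noncomputable def mu (p : ℕ) (t : ℝ) : ℝ :=
  ((t - t ^ p) / (((p : ℝ) - 1) * (1 - t))) ^ ((1 : ℝ) / p)

/-- The sequence `α_0 = α`, `α_{k+1} = p α_k / ((p-1) μ(α_k) + μ(α_k)^(1-p) α_k^p)`. -/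
noncomputable def alphaSeq (p : ℕ) (α : ℝ) : ℕ → ℝ
  | 0 => α
  | k + 1 =>
      (p : ℝ) * alphaSeq p α k /
        (((p : ℝ) - 1) * mu p (alphaSeq p α k) +
          alphaSeq p α k ^ p / mu p (alphaSeq p α k) ^ (p - 1))

/-- `f_0(x) = 1`, `f_{k+1}(x) = (1/p)((p-1) μ(α_k) f_k(x) + x/(μ(α_k)^(p-1) f_k(x)^(p-1)))`. -/
noncomputable def fSeq (p : ℕ) (α : ℝ) : ℕ → ℝ → ℝ
  | 0, _ => 1
  | k + 1, x =>
      (1 / (p : ℝ)) *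
        (((p : ℝ) - 1) * mu p (alphaSeq p α k) * fSeq p α k x +
          x / (mu p (alphaSeq p α k) ^ (p - 1) * fSeq p α k x ^ (p - 1)))

/-- The scaled iterate `f̃_k(x) = (2 α_k/(1+α_k)) f_k(x)`. -/
noncomputable def ftilde (p : ℕ) (α : ℝ) (k : ℕ) (x : ℝ) : ℝ :=
  (2 * alphaSeq p α k / (1 + alphaSeq p α k)) * fSeq p α k x

/-- Complex version of the iteration `f_k`, defined by the same rational expressions. -/
noncomputable def fSeqC (p : ℕ) (α : ℝ) : ℕ → ℂ → ℂ
  | 0, _ => 1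
  | k + 1, z =>
      (1 / (p : ℂ)) *
        (((p : ℂ) - 1) * (mu p (alphaSeq p α k) : ℂ) * fSeqC p α k z +
          z / ((mu p (alphaSeq p α k) : ℂ) ^ (p - 1) * fSeqC p α k z ^ (p - 1)))

/-- `g_k(z) = z / f_k(z^p)`. -/
noncomputable def gC (p : ℕ) (α : ℝ) (k : ℕ) (z : ℂ) : ℂ := z / fSeqC p α k (z ^ p)

/-- `g̃_k(z) = (2/(1+α_k)) g_k(z)`. -/
noncomputable def gtC (p : ℕ) (α : ℝ) (k : ℕ) (z : ℂ) : ℂ :=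
  (2 / (1 + (alphaSeq p α k : ℂ))) * gC p α k z

section aux

variable {p : ℕ}

lemma bern (hp : 2 ≤ p) {t : ℝ} (ht : 0 ≤ t) : (p : ℝ) * t ≤ t ^ p + ((p : ℝ) - 1) := by
  have h := one_add_mul_le_pow (a := t - 1) (by linarith) p
  rw [show (1 : ℝ) + (t - 1) = t by ring] at h
  linarith

lemma bern_strict (hp : 2 ≤ p) {t : ℝ} (ht : 0 ≤ t) (hne : t ≠ 1) :
    (p : ℝ) * t < t ^ p + ((p : ℝ) - 1) := by
  have hp1 : (1 : ℝ) < (p : ℝ) := by exact_mod_cast Nat.lt_of_lt_of_le one_lt_two hp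
  have h := one_add_mul_self_lt_rpow_one_add (s := t - 1) (by linarith)
    (by intro h; exact hne (by linarith)) hp1
  rw [show (1 : ℝ) + (t - 1) = t by ring, Real.rpow_natCast] at h
  linarith

lemma ratio_pos (hp : 2 ≤ p) {β : ℝ} (hβ : β ∈ Set.Ioo (0 : ℝ) 1) :
    0 < (β - β ^ p) / (((p : ℝ) - 1) * (1 - β)) := by
  have hβp : β ^ p < β := by
    have h2 : β ^ p ≤ β ^ 2 := pow_le_pow_of_le_one hβ.1.le hβ.2.le hp
    nlinarith [hβ.1, hβ.2]
  have hp1 : (1 : ℝ) < (p : ℝ) := by exact_mod_cast Nat.lt_of_lt_of_le one_lt_two hp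
  apply div_pos (by linarith)
  have : (0 : ℝ) < 1 - β := by linarith [hβ.2]
  nlinarith

lemma mu_pos (hp : 2 ≤ p) {β : ℝ} (hβ : β ∈ Set.Ioo (0 : ℝ) 1) : 0 < mu p β :=
  Real.rpow_pos_of_pos (ratio_pos hp hβ) _

lemma mu_pow (hp : 2 ≤ p) {β : ℝ} (hβ : β ∈ Set.Ioo (0 : ℝ) 1) :
    ((p : ℝ) - 1) * (1 - β) * (mu p β) ^ p = β - β ^ p := by
  have hc := ratio_pos hp hβ
  have hp0 : (p : ℝ) ≠ 0 := by positivity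
  have hpow : (mu p β) ^ p = (β - β ^ p) / (((p : ℝ) - 1) * (1 - β)) := by
    rw [mu, ← Real.rpow_natCast (_ ^ ((1 : ℝ) / p)) p, ← Real.rpow_mul hc.le]
    rw [one_div, inv_mul_cancel₀ hp0, Real.rpow_one]
  rw [hpow]
  have hp1 : (1 : ℝ) < (p : ℝ) := by exact_mod_cast Nat.lt_of_lt_of_le one_lt_two hp
  have hb1 : (0 : ℝ) < 1 - β := by linarith [hβ.2]
  have hA : ((p : ℝ) - 1) * (1 - β) ≠ 0 := ne_of_gt (mul_pos (by linarith) hb1)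
  rw [mul_comm (((p : ℝ) - 1) * (1 - β)), div_mul_cancel₀ _ hA]

end aux

section aux2

variable {p : ℕ}

lemma mu_gt (hp : 2 ≤ p) {β : ℝ} (hβ : β ∈ Set.Ioo (0 : ℝ) 1) : β < mu p β := by
  have hμ := mu_pos hp hβ
  have hp1 : (1 : ℝ) < (p : ℝ) := by exact_mod_cast Nat.lt_of_lt_of_le one_lt_two hp
  have hb1 : (0 : ℝ) < 1 - β := by linarith [hβ.2]
  have hkey := mu_pow hp hβ
  have hbp : (0 : ℝ) < β ^ p := pow_pos hβ.1 p
  have hsplit : β ^ p = β ^ (p - 1) * β := by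
    rw [← pow_succ]; congr 1; omega
  -- strict Bernoulli at 1/β
  have hβ0 : β ≠ 0 := ne_of_gt hβ.1
  have hs := bern_strict hp (t := 1 / β) (one_div_pos.mpr hβ.1).le
    (by
      intro h
      rw [div_eq_one_iff_eq hβ0] at h
      exact (ne_of_lt hβ.2) h.symm)
  -- multiply by β^p
  have h1 : (p : ℝ) * β ^ (p - 1) < 1 + ((p : ℝ) - 1) * β ^ p := by
    have h3 := mul_lt_mul_of_pos_right hs hbp
    have e1 : (p : ℝ) * (1 / β) * β ^ p = (p : ℝ) * β ^ (p - 1) := by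
      rw [hsplit]; field_simp [hβ0]
    have e2 : ((1 / β) ^ p + ((p : ℝ) - 1)) * β ^ p = 1 + ((p : ℝ) - 1) * β ^ p := by
      rw [div_pow, one_pow]
      field_simp
    rw [e1, e2] at h3
    exact h3
  -- deduce (p-1)(1-β) β^p < β - β^p
  have h1b : (p : ℝ) * β ^ p < β + ((p : ℝ) - 1) * (β ^ p * β) := by
    have h4 := mul_lt_mul_of_pos_right h1 hβ.1
    calc (p : ℝ) * β ^ p = (p : ℝ) * β ^ (p - 1) * β := by rw [hsplit]; ring
      _ < (1 + ((p : ℝ) - 1) * β ^ p) * β := h4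
      _ = β + ((p : ℝ) - 1) * (β ^ p * β) := by ring
  have h2 : ((p : ℝ) - 1) * (1 - β) * β ^ p < β - β ^ p := by nlinarith [h1b]
  have hpowlt : β ^ p < (mu p β) ^ p := by
    have hpos : (0 : ℝ) < ((p : ℝ) - 1) * (1 - β) := mul_pos (by linarith) hb1
    have := h2.trans_le (le_of_eq hkey.symm)
    exact lt_of_mul_lt_mul_left this hpos.le
  exact lt_of_pow_lt_pow_left₀ p hμ.le hpowlt

lemma alpha_mem (hp : 2 ≤ p) {α : ℝ} (hα : α ∈ Set.Ioo (0 : ℝ) 1) (k : ℕ) :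
    alphaSeq p α k ∈ Set.Ioo (0 : ℝ) 1 := by
  induction k with
  | zero => exact hα
  | succ k ih =>
    set β := alphaSeq p α k with hβdef
    have hμ : 0 < mu p β := mu_pos hp ih
    have hA : 0 < mu p β ^ (p - 1) := pow_pos hμ _
    have hp1 : (1 : ℝ) < (p : ℝ) := by exact_mod_cast Nat.lt_of_lt_of_le one_lt_two hp
    have hD : 0 < ((p : ℝ) - 1) * mu p β + β ^ p / mu p β ^ (p - 1) := by
      have h1 : 0 < ((p : ℝ) - 1) * mu p β := mul_pos (by linarith) hμ
      have h2 : 0 < β ^ p / mu p β ^ (p - 1) := div_pos (pow_pos ih.1 p) hA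
      linarith
    have hμβ : β < mu p β := mu_gt hp ih
    have ht : β / mu p β ≠ 1 := ne_of_lt (by rw [div_lt_one hμ]; exact hμβ)
    have hb := bern_strict hp (div_nonneg ih.1.le hμ.le) ht
    have hDlt : (p : ℝ) * β < ((p : ℝ) - 1) * mu p β + β ^ p / mu p β ^ (p - 1) := by
      have h3 := mul_lt_mul_of_pos_right hb hμ
      have hμsplit : mu p β ^ p = mu p β ^ (p - 1) * mu p β := by
        rw [← pow_succ]; congr 1; omega
      have e1 : (p : ℝ) * (β / mu p β) * mu p β = (p : ℝ) * β := by
        field_simp [ne_of_gt hμ]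
      have e2 : ((β / mu p β) ^ p + ((p : ℝ) - 1)) * mu p β
          = β ^ p / mu p β ^ (p - 1) + ((p : ℝ) - 1) * mu p β := by
        rw [div_pow, hμsplit]
        field_simp
      rw [e1, e2] at h3
      linarith
    constructor
    · show 0 < (p : ℝ) * β / _
      exact div_pos (mul_pos (by linarith) ih.1) hD
    · show (p : ℝ) * β / _ < 1
      rw [div_lt_one hD]
      exact hDlt

end aux2

section aux3

variable {p : ℕ}

lemma step_pos (hp : 2 ≤ p) {μ f x : ℝ} (hμ : 0 < μ) (hf : 0 < f) (hx : 0 < x) :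
    0 < (1 / (p : ℝ)) * (((p : ℝ) - 1) * μ * f + x ^ p / (μ ^ (p - 1) * f ^ (p - 1))) := by
  have hp1 : (1 : ℝ) < (p : ℝ) := by exact_mod_cast Nat.lt_of_lt_of_le one_lt_two hp
  have h1 : 0 < ((p : ℝ) - 1) * μ * f := mul_pos (mul_pos (by linarith) hμ) hf
  have h2 : 0 < x ^ p / (μ ^ (p - 1) * f ^ (p - 1)) := by positivity
  have hp0 : (0 : ℝ) < 1 / (p : ℝ) := by positivity
  exact mul_pos hp0 (by linarith)

lemma step_le (hp : 2 ≤ p) {μ f x : ℝ} (hμ : 0 < μ) (hf : 0 < f) (hx : 0 < x) :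
    x ≤ (1 / (p : ℝ)) * (((p : ℝ) - 1) * μ * f + x ^ p / (μ ^ (p - 1) * f ^ (p - 1))) := by
  have hp1 : (1 : ℝ) < (p : ℝ) := by exact_mod_cast Nat.lt_of_lt_of_le one_lt_two hp
  have hμf : 0 < μ * f := mul_pos hμ hf
  have hb := bern hp (t := x / (μ * f)) (div_nonneg hx.le hμf.le)
  have h3 := mul_le_mul_of_nonneg_right hb hμf.le
  have e1 : (p : ℝ) * (x / (μ * f)) * (μ * f) = (p : ℝ) * x := by
    field_simp
  have hμsplit : μ ^ p = μ ^ (p - 1) * μ := by rw [← pow_succ]; congr 1; omega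
  have hfsplit : f ^ p = f ^ (p - 1) * f := by rw [← pow_succ]; congr 1; omega
  have e2 : ((x / (μ * f)) ^ p + ((p : ℝ) - 1)) * (μ * f)
      = x ^ p / (μ ^ (p - 1) * f ^ (p - 1)) + ((p : ℝ) - 1) * (μ * f) := by
    rw [div_pow, mul_pow, hμsplit, hfsplit]
    field_simp
  rw [e1, e2] at h3
  rw [← sub_nonneg]
  have heq : (1 / (p : ℝ)) * (((p : ℝ) - 1) * μ * f + x ^ p / (μ ^ (p - 1) * f ^ (p - 1))) - x
      = (1 / (p : ℝ)) * ((x ^ p / (μ ^ (p - 1) * f ^ (p - 1)) + ((p : ℝ) - 1) * (μ * f)) - (p : ℝ) * x) := by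
    field_simp
    ring
  rw [heq]
  have hppos : (0 : ℝ) < 1 / (p : ℝ) := by positivity
  apply mul_nonneg hppos.le
  linarith

lemma phi_mono (hp : 2 ≤ p) {β μ h : ℝ} (hβ : β ∈ Set.Ioo (0 : ℝ) 1)
    (hμ : 0 < μ) (hkey : ((p : ℝ) - 1) * (1 - β) * μ ^ p = β - β ^ p)
    (hh_le1 : h ≤ 1) (hh_geβ : β ≤ h) :
    β * (((p : ℝ) - 1) * μ + h ^ p / μ ^ (p - 1))
      ≤ h * (((p : ℝ) - 1) * μ + β ^ p / μ ^ (p - 1)) := by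
  have hp1 : (1 : ℝ) < (p : ℝ) := by exact_mod_cast Nat.lt_of_lt_of_le one_lt_two hp
  have hA : 0 < μ ^ (p - 1) := pow_pos hμ _
  have hb1 : (0 : ℝ) < 1 - β := by linarith [hβ.2]
  obtain ⟨lam, hlamdef⟩ : ∃ l : ℝ, l = (1 - h) / (1 - β) := ⟨_, rfl⟩
  have hlam0 : 0 ≤ lam := hlamdef ▸ div_nonneg (by linarith) hb1.le
  have hlam1 : lam ≤ 1 := by rw [hlamdef]; exact (div_le_one hb1).mpr (by linarith)
  have hh_eq : h = lam * β + (1 - lam) := by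
    rw [hlamdef]
    field_simp
    ring
  have hcx := (convexOn_pow (𝕜 := ℝ) p).2 (Set.mem_Ici.mpr hβ.1.le)
    (Set.mem_Ici.mpr zero_le_one) hlam0 (by linarith : (0:ℝ) ≤ 1 - lam) (by ring)
  simp only [smul_eq_mul, mul_one, one_pow] at hcx
  have hH : h ^ p ≤ lam * β ^ p + (1 - lam) := by
    rw [hh_eq]; exact hcx
  have hHmul : (1 - β) * β * h ^ p ≤ (1 - β) * β * (lam * β ^ p + (1 - lam)) :=
    mul_le_mul_of_nonneg_left hH (by nlinarith [hβ.1, hb1])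
  have hident : β * (β - β ^ p) + (1 - β) * β * (lam * β ^ p + (1 - lam))
      = h * (β - β ^ p) + (1 - β) * h * β ^ p := by
    rw [hh_eq]; ring
  have G : β * (β - β ^ p) + (1 - β) * β * h ^ p
      ≤ h * (β - β ^ p) + (1 - β) * h * β ^ p := by linarith
  have G2 : β * (((p : ℝ) - 1) * μ ^ p) + β * h ^ p
      ≤ h * (((p : ℝ) - 1) * μ ^ p) + h * β ^ p := by
    have hG' : (1 - β) * (β * (((p : ℝ) - 1) * μ ^ p) + β * h ^ p)
        ≤ (1 - β) * (h * (((p : ℝ) - 1) * μ ^ p) + h * β ^ p) := by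
      calc (1 - β) * (β * (((p : ℝ) - 1) * μ ^ p) + β * h ^ p)
          = β * (((p : ℝ) - 1) * (1 - β) * μ ^ p) + (1 - β) * β * h ^ p := by ring
        _ = β * (β - β ^ p) + (1 - β) * β * h ^ p := by rw [hkey]
        _ ≤ h * (β - β ^ p) + (1 - β) * h * β ^ p := G
        _ = h * (((p : ℝ) - 1) * (1 - β) * μ ^ p) + (1 - β) * h * β ^ p := by rw [hkey]
        _ = (1 - β) * (h * (((p : ℝ) - 1) * μ ^ p) + h * β ^ p) := by ring
    exact le_of_mul_le_mul_left hG' hb1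
  have hμsplit : μ ^ p = μ ^ (p - 1) * μ := by rw [← pow_succ]; congr 1; omega
  apply le_of_mul_le_mul_right _ hA
  calc β * (((p : ℝ) - 1) * μ + h ^ p / μ ^ (p - 1)) * μ ^ (p - 1)
      = β * (((p : ℝ) - 1) * (μ ^ (p - 1) * μ)) + β * h ^ p := by
        field_simp
    _ = β * (((p : ℝ) - 1) * μ ^ p) + β * h ^ p := by rw [← hμsplit]
    _ ≤ h * (((p : ℝ) - 1) * μ ^ p) + h * β ^ p := G2
    _ = h * (((p : ℝ) - 1) * (μ ^ (p - 1) * μ)) + h * β ^ p := by rw [hμsplit]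
    _ = h * (((p : ℝ) - 1) * μ + β ^ p / μ ^ (p - 1)) * μ ^ (p - 1) := by
        field_simp

lemma step_ge (hp : 2 ≤ p) {β μ f x : ℝ} (hβ : β ∈ Set.Ioo (0 : ℝ) 1)
    (hμ : 0 < μ) (hkey : ((p : ℝ) - 1) * (1 - β) * μ ^ p = β - β ^ p)
    (hf : 0 < f) (hx : 0 < x) (hh1 : x ≤ f) (hhβ : β * f ≤ x) :
    ((p : ℝ) * β / (((p : ℝ) - 1) * μ + β ^ p / μ ^ (p - 1))) *
      ((1 / (p : ℝ)) * (((p : ℝ) - 1) * μ * f + x ^ p / (μ ^ (p - 1) * f ^ (p - 1)))) ≤ x := by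
  have hp1 : (1 : ℝ) < (p : ℝ) := by exact_mod_cast Nat.lt_of_lt_of_le one_lt_two hp
  have hA : 0 < μ ^ (p - 1) := pow_pos hμ _
  have hB : 0 < f ^ (p - 1) := pow_pos hf _
  have hD : 0 < ((p : ℝ) - 1) * μ + β ^ p / μ ^ (p - 1) := by
    have h1 : 0 < ((p : ℝ) - 1) * μ := mul_pos (by linarith) hμ
    have h2 : 0 < β ^ p / μ ^ (p - 1) := div_pos (pow_pos hβ.1 p) hA
    linarith
  obtain ⟨h, hhdef⟩ : ∃ t : ℝ, t = x / f := ⟨_, rfl⟩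
  have hh_le1 : h ≤ 1 := by rw [hhdef]; exact (div_le_one hf).mpr hh1
  have hh_geβ : β ≤ h := by rw [hhdef]; exact (le_div_iff₀ hf).mpr hhβ
  have hmain := phi_mono hp hβ hμ hkey hh_le1 hh_geβ
  have hfsplit : f ^ p = f ^ (p - 1) * f := by rw [← pow_succ]; congr 1; omega
  have hxhf : x = h * f := by rw [hhdef]; exact (div_mul_cancel₀ x hf.ne').symm
  have hxp : x ^ p = h ^ p * (f ^ (p - 1) * f) := by rw [hxhf, mul_pow, hfsplit]
  have hxpe : x ^ p / (μ ^ (p - 1) * f ^ (p - 1)) = f * (h ^ p / μ ^ (p - 1)) := by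
    rw [hxp]; field_simp
  have hfin : (p : ℝ) * β / (((p : ℝ) - 1) * μ + β ^ p / μ ^ (p - 1)) *
      ((1 / (p : ℝ)) * (((p : ℝ) - 1) * μ * f + f * (h ^ p / μ ^ (p - 1)))) ≤ h * f := by
    rw [div_mul_eq_mul_div, div_le_iff₀ hD]
    have hp0 : (p : ℝ) ≠ 0 := by positivity
    calc (p : ℝ) * β * ((1 / (p : ℝ)) * (((p : ℝ) - 1) * μ * f + f * (h ^ p / μ ^ (p - 1))))
        = f * (β * (((p : ℝ) - 1) * μ + h ^ p / μ ^ (p - 1))) := by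
          field_simp
      _ ≤ f * (h * (((p : ℝ) - 1) * μ + β ^ p / μ ^ (p - 1))) :=
          mul_le_mul_of_nonneg_left hmain hf.le
      _ = h * f * (((p : ℝ) - 1) * μ + β ^ p / μ ^ (p - 1)) := by ring
  calc ((p : ℝ) * β / (((p : ℝ) - 1) * μ + β ^ p / μ ^ (p - 1))) *
      ((1 / (p : ℝ)) * (((p : ℝ) - 1) * μ * f + x ^ p / (μ ^ (p - 1) * f ^ (p - 1))))
      = (p : ℝ) * β / (((p : ℝ) - 1) * μ + β ^ p / μ ^ (p - 1)) *
        ((1 / (p : ℝ)) * (((p : ℝ) - 1) * μ * f + f * (h ^ p / μ ^ (p - 1)))) := by rw [hxpe]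
    _ ≤ h * f := hfin
    _ = x := hxhf.symm

end aux3

section aux4

variable {p : ℕ}

lemma f_bounds (hp : 2 ≤ p) {α : ℝ} (hα : α ∈ Set.Ioo (0 : ℝ) 1) (k : ℕ) {x : ℝ}
    (hx : x ∈ Set.Ioc (0 : ℝ) 1) :
    0 < fSeq p α k (x ^ p) ∧ x ≤ fSeq p α k (x ^ p) ∧
      (α ≤ x → alphaSeq p α k * fSeq p α k (x ^ p) ≤ x) := by
  induction k with
  | zero =>
    refine ⟨by simp [fSeq], by simpa [fSeq] using hx.2, ?_⟩
    intro hαx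
    simpa [fSeq, alphaSeq] using hαx
  | succ k ih =>
    obtain ⟨hf, hh1, hhα⟩ := ih
    have hβ := alpha_mem hp hα k
    have hμ := mu_pos hp hβ
    have hkey := mu_pow hp hβ
    refine ⟨?_, ?_, ?_⟩
    · show 0 < (1 / (p : ℝ)) * _
      exact step_pos hp hμ hf hx.1
    · show x ≤ (1 / (p : ℝ)) * _
      exact step_le hp hμ hf hx.1
    · intro hαx
      show (p : ℝ) * alphaSeq p α k / _ * ((1 / (p : ℝ)) * _) ≤ x
      exact step_ge hp hβ hμ hkey hf hx.1 hh1 (hhα hαx)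

end aux4

lemma fSeqC_ofReal (p : ℕ) (α : ℝ) (k : ℕ) (u : ℝ) :
    fSeqC p α k (u : ℂ) = ((fSeq p α k u : ℝ) : ℂ) := by
  induction k with
  | zero => simp [fSeqC, fSeq]
  | succ k ih =>
    simp only [fSeqC, fSeq, ih]
    push_cast
    ring

/-- **Lemma 4, part 1.** For every `α ∈ (0,1)` and every `k ≥ 0`,
`|z (g̃_k(z) - sect_p(z))| ≤ max { α, (1-α_k)/(1+α_k) }` for every nonzero `z ∈ S_p`,
i.e. `z = x e^(2πij/p)` with `x ∈ (0,1]`, `j ∈ {1,…,p}`, where `sect_p(z) = e^(2πij/p)`. -/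
theorem sector_weighted_error_gtilde (p : ℕ) (hp : 2 ≤ p)
    (α : ℝ) (hα : α ∈ Set.Ioo (0 : ℝ) 1) (k : ℕ) :
    ∀ x ∈ Set.Ioc (0 : ℝ) 1, ∀ j ∈ Finset.Icc 1 p,
      ‖(((x : ℂ) * Complex.exp (2 * (Real.pi : ℂ) * Complex.I * j / p)) *
          (gtC p α k ((x : ℂ) * Complex.exp (2 * (Real.pi : ℂ) * Complex.I * j / p)) -
            Complex.exp (2 * (Real.pi : ℂ) * Complex.I * j / p)))‖ ≤
      max α ((1 - alphaSeq p α k) / (1 + alphaSeq p α k)) := by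
  intro x hx j hj
  have hβ : alphaSeq p α k ∈ Set.Ioo (0 : ℝ) 1 := alpha_mem hp hα k
  obtain ⟨hf, hh1, hhα⟩ := f_bounds hp hα k hx
  have hp0C : (p : ℂ) ≠ 0 := Nat.cast_ne_zero.mpr (by omega)
  set β := alphaSeq p α k with hβdef
  set f := fSeq p α k (x ^ p) with hfdef
  set w : ℂ := 2 * (Real.pi : ℂ) * Complex.I * j / p with hw
  set ω : ℂ := Complex.exp w with hω
  have hωp : ω ^ p = 1 := by
    rw [hω, ← Complex.exp_nat_mul]
    have e : (p : ℂ) * w = (j : ℂ) * (2 * (Real.pi : ℂ) * Complex.I) := by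
      rw [hw]; field_simp
    rw [e, Complex.exp_nat_mul_two_pi_mul_I]
  have habsω : ‖ω‖ = 1 := by
    have e : w = ((2 * Real.pi * j / p : ℝ) : ℂ) * Complex.I := by
      rw [hw]; push_cast; ring
    rw [hω, e, Complex.norm_exp_ofReal_mul_I]
  have hzp : ((x : ℂ) * ω) ^ p = ((x ^ p : ℝ) : ℂ) := by
    rw [mul_pow, hωp, mul_one]
    norm_cast
  have hfC : fSeqC p α k (((x : ℂ) * ω) ^ p) = ((f : ℝ) : ℂ) := by
    rw [hzp, fSeqC_ofReal]
  have h1β : (0 : ℝ) < 1 + β := by linarith [hβ.1]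
  have hfne : ((f : ℝ) : ℂ) ≠ 0 := Complex.ofReal_ne_zero.mpr hf.ne'
  have h1βne : (1 : ℂ) + (β : ℂ) ≠ 0 := by
    have : ((1 + β : ℝ) : ℂ) ≠ 0 := Complex.ofReal_ne_zero.mpr h1β.ne'
    push_cast at this
    exact this
  obtain ⟨r, hrdef⟩ : ∃ r : ℝ, r = 2 / (1 + β) * (x / f) := ⟨_, rfl⟩
  have hexpr : ((x : ℂ) * ω) * (gtC p α k ((x : ℂ) * ω) - ω)
      = ((x * (r - 1) : ℝ) : ℂ) * ω ^ 2 := by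
    simp only [gtC, gC, hfC]
    rw [← hβdef]
    rw [hrdef]
    push_cast
    field_simp
  rw [hexpr, norm_mul, norm_pow, habsω, Complex.norm_real, Real.norm_eq_abs, one_pow, mul_one]
  rw [abs_mul, abs_of_pos hx.1]
  have hxf1 : x / f ≤ 1 := (div_le_one hf).mpr hh1
  rcases le_or_gt x α with hxα | hxα
  · have hr0 : 0 ≤ r := by
      rw [hrdef]
      exact mul_nonneg (div_nonneg (by norm_num) h1β.le) (div_nonneg hx.1.le hf.le)
    have hr2 : r ≤ 2 := by
      rw [hrdef]
      calc 2 / (1 + β) * (x / f) ≤ 2 / (1 + β) * 1 :=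
            mul_le_mul_of_nonneg_left hxf1 (div_nonneg (by norm_num) h1β.le)
        _ = 2 / (1 + β) := mul_one _
        _ ≤ 2 := by
            rw [div_le_iff₀ h1β]; nlinarith [hβ.1]
    have habs1 : |r - 1| ≤ 1 := abs_le.mpr ⟨by linarith, by linarith⟩
    calc x * |r - 1| ≤ x * 1 := mul_le_mul_of_nonneg_left habs1 hx.1.le
      _ = x := mul_one x
      _ ≤ α := hxα
      _ ≤ max α ((1 - β) / (1 + β)) := le_max_left _ _
  · have hβf := hhα hxα.le
    have hxfβ : β ≤ x / f := (le_div_iff₀ hf).mpr hβf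
    have habs1 : |r - 1| ≤ (1 - β) / (1 + β) := by
      rw [abs_le]
      constructor
      · rw [hrdef]
        have e : 2 / (1 + β) * (x / f) - 1 + (1 - β) / (1 + β) = 2 * (x / f - β) / (1 + β) := by
          field_simp
          ring
        have hnn : 0 ≤ 2 * (x / f - β) / (1 + β) :=
          div_nonneg (by linarith) h1β.le
        linarith
      · rw [hrdef]
        have e : (1 - β) / (1 + β) - (2 / (1 + β) * (x / f) - 1) = 2 * (1 - x / f) / (1 + β) := by
          field_simp
          ring
        have hnn : 0 ≤ 2 * (1 - x / f) / (1 + β) :=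
          div_nonneg (by linarith) h1β.le
        linarith
    calc x * |r - 1| ≤ 1 * ((1 - β) / (1 + β)) :=
          mul_le_mul hx.2 habs1 (abs_nonneg _) one_pos.le
      _ = (1 - β) / (1 + β) := one_mul _
      _ ≤ max α ((1 - β) / (1 + β)) := le_max_right _ _
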